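/- arXiv:1311.2772 — 4 statements merged into one kernel-verified Lean document; each statement's English description precedes it below -/
import Mathlib

section
/- Let d ≥ 3 and let v : Fin d × Fin d → ℂ be a vector satisfying (U ⊗ U)·v = v for every d×d unitary matrix U with det(U) = 1 (every special unitary matrix). Then v = 0. (In particular, for d ≥ 3 there is no maximally entangled state of two qudits that is invariant under all transformations U ⊗ U, in contrast with the qubit singlet state.) -/
/-!
Diagonal special unitaries already suffice. For `p, q` pick `k ∉ {p, q}` (possible as `d ≥ 3`)
and let `D = diag(i at p, -i at k, 1 elsewhere)`, which is special unitary. Invariance under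
`D ⊗ D` gives `D_p D_q v(p,q) = v(p,q)`, where `D_p D_q` is `-1` if `q = p` and `i` otherwise;
in both cases it differs from `1`, so `v(p,q) = 0`.
-/

open Matrix
open scoped Kronecker

namespace Matrix

section Diagonal

variable {n α : Type*} [Fintype n] [DecidableEq n] [CommRing α] [StarRing α]

theorem diagonal_mem_unitaryGroup {w : n → α} (hw : ∀ i, w i ∈ unitary α) :
    diagonal w ∈ unitaryGroup n α := by
  rw [mem_unitaryGroup_iff, star_eq_conjTranspose, diagonal_conjTranspose, diagonal_mul_diagonal,
    ← diagonal_one]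
  exact congrArg diagonal (funext fun i => Unitary.mul_star_self_of_mem (hw i))

theorem diagonal_mulSingle_mul_mulSingle_star_mem_specialUnitaryGroup (a b : n) {z : α}
    (hz : z ∈ unitary α) :
    diagonal (Pi.mulSingle a z * Pi.mulSingle b (star z)) ∈ specialUnitaryGroup n α := by
  have hsingle (c : n) {u : α} (hu : u ∈ unitary α) (i : n) :
      (Pi.mulSingle c u : n → α) i ∈ unitary α := by
    rw [Pi.mulSingle_apply]
    split_ifs
    exacts [hu, one_mem _]
  refine mem_specialUnitaryGroup_iff.2 ⟨diagonal_mem_unitaryGroup fun i => ?_, ?_⟩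
  · exact mul_mem (hsingle a hz i) (hsingle b (Unitary.star_mem hz) i)
  · simp only [det_diagonal, Pi.mul_apply]
    rw [Finset.prod_mul_distrib, Finset.prod_pi_mulSingle', Finset.prod_pi_mulSingle',
      if_pos (Finset.mem_univ a), if_pos (Finset.mem_univ b),
      Unitary.mul_star_self_of_mem hz]

end Diagonal

theorem kronecker_diagonal_mulVec_apply {m n α : Type*} [Fintype m] [Fintype n]
    [DecidableEq m] [DecidableEq n] [CommSemiring α]
    (w₁ : m → α) (w₂ : n → α) (v : m × n → α) (p : m) (q : n) :
    ((diagonal w₁ ⊗ₖ diagonal w₂) *ᵥ v) (p, q) = w₁ p * w₂ q * v (p, q) := by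
  rw [diagonal_kronecker_diagonal, mulVec_diagonal]

end Matrix

theorem Complex.I_mem_unitary : Complex.I ∈ unitary ℂ :=
  Unitary.mem_iff.2 ⟨by simp, by simp⟩

/-- For `d ≥ 3`, the only vector on `ℂ^d ⊗ ℂ^d` invariant under `U ⊗ U` for all special
unitary matrices `U` is the zero vector. -/
theorem stmt5 (d : ℕ) (hd : 3 ≤ d) (v : Fin d × Fin d → ℂ)
    (hv : ∀ U : Matrix (Fin d) (Fin d) ℂ, U * Uᴴ = 1 → U.det = 1 →
      (U ⊗ₖ U) *ᵥ v = v) :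
    v = 0 := by
  funext ⟨p, q⟩
  have hcard : ({p, q} : Finset (Fin d)).card < (Finset.univ : Finset (Fin d)).card :=
    Finset.card_le_two.trans_lt (by rw [Finset.card_univ, Fintype.card_fin]; omega)
  obtain ⟨k, -, hk⟩ := Finset.exists_mem_notMem_of_card_lt_card hcard
  obtain ⟨hkp, hkq⟩ : k ≠ p ∧ k ≠ q := by simpa [not_or] using hk
  obtain ⟨hunit, hdet⟩ := mem_specialUnitaryGroup_iff.1 <|
    diagonal_mulSingle_mul_mulSingle_star_mem_specialUnitaryGroup p k Complex.I_mem_unitary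
  have hfix := congrFun (hv _ (mem_unitaryGroup_iff.1 hunit) hdet) (p, q)
  rw [kronecker_diagonal_mulVec_apply] at hfix
  set w : Fin d → ℂ := Pi.mulSingle p Complex.I * Pi.mulSingle k (star Complex.I)
  have hphase : w p * w q ≠ 1 := by
    rcases eq_or_ne q p with rfl | hqp
    · norm_num [w, hkp.symm]
    · simp [w, hkp.symm, hkq.symm, hqp, Complex.ext_iff]
  exact (mul_left_eq_self₀.1 hfix).resolve_left hphase
end

section
/- Let m ≥ 1, d ≥ 1, and let M₁, …, M_m be symmetric real d×d matrices, regarded as complex matrices. For every ψ ∈ ℂ^d with Σᵢ |ψᵢ|² = 1, the point (⟨ψ, M₁·ψ⟩, …, ⟨ψ, M_m·ψ⟩) ∈ ℝ^m (each such inner product is real because M_k is real symmetric, hence Hermitian) lies in the convex hull (over ℝ) of the set { (xᵀM₁x, …, xᵀM_mx) : x ∈ ℝ^d, Σᵢ xᵢ² = 1 }. Hence, to generate the convex hull of the set of fidelity vectors produced by pure states, it suffices to consider pure states with real coefficients only. -/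
/-!
Writing `ψ = a + i b` with `a, b` real, the complex form of a real symmetric matrix splits as
`ψ* M ψ = aᵀ M a + bᵀ M b`, the cross terms `i (aᵀ M b - bᵀ M a)` cancelling by symmetry.
Quadratic forms are homogeneous of degree two, so `aᵀ M a = ‖a‖² · uᵀ M u` for a unit vector `u`,
and `‖a‖² + ‖b‖² = ‖ψ‖² = 1` exhibits the fidelity vector of `ψ` as a convex combination of the
fidelity vectors of two real unit vectors.
-/

open Matrix

section HomogeneousOfDegreeTwo

variable {ι F : Type*} [Fintype ι] [AddCommGroup F] [Module ℝ F] {Q : (ι → ℝ) → F}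

lemma sum_smul_apply_sq (c : ℝ) (x : ι → ℝ) : ∑ i, (c • x) i ^ 2 = c ^ 2 * ∑ i, x i ^ 2 := by
  simp only [Pi.smul_apply, smul_eq_mul, mul_pow, Finset.mul_sum]

lemma eq_zero_of_sum_sq_eq_zero {x : ι → ℝ} (hx : ∑ i, x i ^ 2 = 0) : x = 0 :=
  funext fun i => pow_eq_zero_iff two_ne_zero |>.mp <|
    congrFun ((Fintype.sum_eq_zero_iff_of_nonneg fun j => sq_nonneg (x j)).mp hx) i

lemma exists_sum_sq_eq_one_and_eq_smul (hQ : ∀ (c : ℝ) x, Q (c • x) = c ^ 2 • Q x)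
    {a : ι → ℝ} (ha : 0 < ∑ i, a i ^ 2) :
    ∃ u, ∑ i, u i ^ 2 = 1 ∧ Q a = (∑ i, a i ^ 2) • Q u := by
  have hs : √(∑ i, a i ^ 2) ^ 2 = ∑ i, a i ^ 2 := Real.sq_sqrt ha.le
  refine ⟨(√(∑ i, a i ^ 2))⁻¹ • a, ?_, ?_⟩
  · rw [sum_smul_apply_sq, inv_pow, hs, inv_mul_cancel₀ ha.ne']
  · rw [hQ, smul_smul, inv_pow, hs, mul_inv_cancel₀ ha.ne', one_smul]

lemma add_mem_convexHull_of_sum_sq_add_sum_sq_eq_one (hQ : ∀ (c : ℝ) x, Q (c • x) = c ^ 2 • Q x)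
    {a b : ι → ℝ} (hab : ∑ i, a i ^ 2 + ∑ i, b i ^ 2 = 1) :
    Q a + Q b ∈ convexHull ℝ (Q '' {x | ∑ i, x i ^ 2 = 1}) := by
  have hQ0 : Q 0 = 0 := by simpa using hQ 0 0
  have ha0 : 0 ≤ ∑ i, a i ^ 2 := Finset.sum_nonneg fun i _ => sq_nonneg (a i)
  have hb0 : 0 ≤ ∑ i, b i ^ 2 := Finset.sum_nonneg fun i _ => sq_nonneg (b i)
  rcases ha0.eq_or_lt with ha | ha
  · rw [eq_zero_of_sum_sq_eq_zero ha.symm, hQ0, zero_add]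
    exact subset_convexHull ℝ _ (Set.mem_image_of_mem Q (show ∑ i, b i ^ 2 = 1 by linarith))
  rcases hb0.eq_or_lt with hb | hb
  · rw [eq_zero_of_sum_sq_eq_zero hb.symm, hQ0, add_zero]
    exact subset_convexHull ℝ _ (Set.mem_image_of_mem Q (show ∑ i, a i ^ 2 = 1 by linarith))
  obtain ⟨u, hu, hQa⟩ := exists_sum_sq_eq_one_and_eq_smul hQ ha
  obtain ⟨v, hv, hQb⟩ := exists_sum_sq_eq_one_and_eq_smul hQ hb
  rw [hQa, hQb]
  exact convex_convexHull ℝ _ (subset_convexHull ℝ _ (Set.mem_image_of_mem Q hu))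
    (subset_convexHull ℝ _ (Set.mem_image_of_mem Q hv)) ha0 hb0 hab

end HomogeneousOfDegreeTwo

lemma Matrix.smul_dotProduct_mulVec_smul {ι : Type*} [Fintype ι] (A : Matrix ι ι ℝ) (c : ℝ)
    (x : ι → ℝ) :
    (c • x) ⬝ᵥ (A *ᵥ (c • x)) = c ^ 2 * (x ⬝ᵥ (A *ᵥ x)) := by
  rw [mulVec_smul, smul_dotProduct, dotProduct_smul, smul_eq_mul, smul_eq_mul, ← mul_assoc, sq]

lemma Matrix.re_star_dotProduct_map_ofReal_mulVec {ι : Type*} [Fintype ι] (A : Matrix ι ι ℝ)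
    (ψ : ι → ℂ) :
    (star ψ ⬝ᵥ (A.map Complex.ofReal *ᵥ ψ)).re =
      (fun i => (ψ i).re) ⬝ᵥ (A *ᵥ fun i => (ψ i).re) +
        (fun i => (ψ i).im) ⬝ᵥ (A *ᵥ fun i => (ψ i).im) := by
  simp only [dotProduct, mulVec, Complex.re_sum, Finset.mul_sum, ← Finset.sum_add_distrib]
  refine Finset.sum_congr rfl fun i _ => Finset.sum_congr rfl fun j _ => ?_
  simp only [Pi.star_apply, map_apply, Complex.mul_re, Complex.mul_im, Complex.star_def,
    Complex.conj_re, Complex.conj_im, Complex.ofReal_re, Complex.ofReal_im]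
  ring

lemma Matrix.IsSymm.isHermitian_map_ofReal {ι : Type*} {A : Matrix ι ι ℝ} (hA : A.IsSymm) :
    (A.map Complex.ofReal).IsHermitian :=
  (isHermitian_iff_isSymm.mpr hA).map _ fun x => (Complex.conj_ofReal x).symm

theorem stmt6_general (m d : ℕ)
    (M : Fin m → Matrix (Fin d) (Fin d) ℝ) (hsym : ∀ k, (M k)ᵀ = M k)
    (ψ : Fin d → ℂ) (hψ : ∑ i, Complex.normSq (ψ i) = 1) :
    (∀ k : Fin m,
        (∑ i, (starRingEnd ℂ) (ψ i) * (((M k).map Complex.ofReal) *ᵥ ψ) i).im = 0) ∧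
      (fun k : Fin m =>
          (∑ i, (starRingEnd ℂ) (ψ i) * (((M k).map Complex.ofReal) *ᵥ ψ) i).re) ∈
        convexHull ℝ
          {p : Fin m → ℝ | ∃ x : Fin d → ℝ,
            (∑ i, x i ^ 2 = 1) ∧ p = fun k => x ⬝ᵥ (M k *ᵥ x)} := by
  set Q : (Fin d → ℝ) → Fin m → ℝ := fun x k => x ⬝ᵥ (M k *ᵥ x)
  have hQ (c : ℝ) (x : Fin d → ℝ) : Q (c • x) = c ^ 2 • Q x :=
    funext fun k => smul_dotProduct_mulVec_smul (M k) c x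
  refine ⟨fun k => (IsSymm.isHermitian_map_ofReal (hsym k)).im_star_dotProduct_mulVec_self ψ, ?_⟩
  have hre : (fun k => (star ψ ⬝ᵥ ((M k).map Complex.ofReal *ᵥ ψ)).re) =
      Q (fun i => (ψ i).re) + Q (fun i => (ψ i).im) :=
    funext fun k => re_star_dotProduct_map_ofReal_mulVec (M k) ψ
  have hnorm : ∑ i, (ψ i).re ^ 2 + ∑ i, (ψ i).im ^ 2 = 1 := by
    simpa only [Complex.normSq_apply, ← sq, ← Finset.sum_add_distrib] using hψ
  have hS : {p : Fin m → ℝ | ∃ x : Fin d → ℝ, (∑ i, x i ^ 2 = 1) ∧ p = Q x} =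
      Q '' {x | ∑ i, x i ^ 2 = 1} := by
    ext p; exact exists_congr fun x => and_congr_right fun _ => eq_comm
  exact hre ▸ hS ▸ add_mem_convexHull_of_sum_sq_add_sum_sq_eq_one hQ hnorm

/-- To generate the convex hull of the set of vectors of quadratic forms (fidelity vectors)
produced by pure states, it suffices to consider pure states with real coefficients only:
the vector of expectation values of real symmetric matrices in any complex pure state is real
and lies in the convex hull of the vectors produced by real unit vectors. -/
theorem stmt6 (m d : ℕ) (hm : 1 ≤ m) (hd : 1 ≤ d)
    (M : Fin m → Matrix (Fin d) (Fin d) ℝ) (hsym : ∀ k, (M k)ᵀ = M k)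
    (ψ : Fin d → ℂ) (hψ : ∑ i, Complex.normSq (ψ i) = 1) :
    (∀ k : Fin m,
        (∑ i, (starRingEnd ℂ) (ψ i) * (((M k).map Complex.ofReal) *ᵥ ψ) i).im = 0) ∧
      (fun k : Fin m =>
          (∑ i, (starRingEnd ℂ) (ψ i) * (((M k).map Complex.ofReal) *ᵥ ψ) i).re) ∈
        convexHull ℝ
          {p : Fin m → ℝ | ∃ x : Fin d → ℝ,
            (∑ i, x i ^ 2 = 1) ∧ p = fun k => x ⬝ᵥ (M k *ᵥ x)} :=
  stmt6_general m d M hsym ψ hψ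
end

section
/- For every real number d ≥ 2, the 3×3 matrices B₁, B₂, B₃ satisfy B₁ + B₂ + B₃ = I₃ (the 3×3 identity), and the matrices Fᵢ = D·Bᵢ·D with D = diag(√(d+1), √(d+1), √(d−2)) satisfy Fᵢ·Fᵢ = d·Fᵢ for each i ∈ {1,2,3} and Fᵢ·Fⱼ·Fᵢ = Fᵢ for all i ≠ j. (These are the defining relations of the partially transposed transposition operators V^{t}(14), V^{t}(24), V^{t}(34) on (ℂ^d)^{⊗4}, verified for the explicit irreducible representation matrices for n = 4 and partition α₂ = (1,1) valid for d ≥ 3 presented in the paper, up to overall normalization.) -/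
/-!
Each `Bᵢ` is the rank-one projection `vᵢvᵢᵀ` onto one of three orthonormal vectors, so
`B₁ + B₂ + B₃ = I`, and `Fᵢ = wᵢwᵢᵀ` with `wᵢ = D vᵢ`. Since `D² = (d+1) I - 3 e₃e₃ᵀ`, the Gram
matrix of the `wᵢ` is `wᵢ ⬝ wⱼ = (d+1) δᵢⱼ - 3 vᵢ₃ vⱼ₃`, and every `vᵢ` has third coordinate
`±1/√3`; hence `wᵢ ⬝ wᵢ = d` and `wᵢ ⬝ wⱼ = ±1` for `i ≠ j`. For rank-one matrices
`(wwᵀ)² = (w ⬝ w) wwᵀ` and `(uuᵀ)(vvᵀ)(uuᵀ) = (u ⬝ v)² uuᵀ`, which gives both relations.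
-/

open Matrix

/-- The diagonal matrix `D = diag(√(d+1), √(d+1), √(d−2))`. -/
noncomputable def Dmat (d : ℝ) : Matrix (Fin 3) (Fin 3) ℝ :=
  Matrix.diagonal ![Real.sqrt (d + 1), Real.sqrt (d + 1), Real.sqrt (d - 2)]

/-- The three matrices `B₁, B₂, B₃` for `n = 4`, partition `α₂ = (1,1)`. -/
noncomputable def Bmat : Fin 3 → Matrix (Fin 3) (Fin 3) ℝ :=
  ![!![1 / 2, -1 / (2 * Real.sqrt 3), -1 / Real.sqrt 6;
      -1 / (2 * Real.sqrt 3), 1 / 6, 1 / (3 * Real.sqrt 2);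
      -1 / Real.sqrt 6, 1 / (3 * Real.sqrt 2), 1 / 3],
    !![1 / 2, 1 / (2 * Real.sqrt 3), 1 / Real.sqrt 6;
      1 / (2 * Real.sqrt 3), 1 / 6, 1 / (3 * Real.sqrt 2);
      1 / Real.sqrt 6, 1 / (3 * Real.sqrt 2), 1 / 3],
    !![0, 0, 0;
      0, 2 / 3, -Real.sqrt 2 / 3;
      0, -Real.sqrt 2 / 3, 1 / 3]]

/-- `Fᵢ = D·Bᵢ·D` (the paper's irrep matrices `𝕍′_{α₂}((i)4)` are `(1/3)·Fᵢ`). -/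
noncomputable def Fmat (d : ℝ) (i : Fin 3) : Matrix (Fin 3) (Fin 3) ℝ :=
  Dmat d * Bmat i * Dmat d

section RankOne

variable {m n R : Type*} [CommSemiring R]

theorem vecMulVec_self_mul_self [Fintype n] (w : n → R) :
    vecMulVec w w * vecMulVec w w = (w ⬝ᵥ w) • vecMulVec w w := by
  rw [vecMulVec_mul_vecMulVec, vecMulVec_smul]

theorem vecMulVec_self_mul_mul_self_of_sq_dotProduct [Fintype n] {u v : n → R}
    (h : (u ⬝ᵥ v) ^ 2 = 1) :
    vecMulVec u u * vecMulVec v v * vecMulVec u u = vecMulVec u u := by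
  rw [vecMulVec_mul_vecMulVec, vecMulVec_mul_vecMulVec, vecMulVec_smul, smul_dotProduct,
    smul_eq_mul, dotProduct_comm v u, ← sq, h, one_smul]

theorem diagonal_mul_vecMulVec_mul_diagonal [Fintype n] [DecidableEq n] (s u v : n → R) :
    diagonal s * vecMulVec u v * diagonal s = vecMulVec (s * u) (s * v) := by
  ext i j
  simp only [diagonal_mul, mul_diagonal, vecMulVec_apply, Pi.mul_apply]
  ring

theorem transpose_mul_self_eq_sum_vecMulVec [Fintype m] (v : m → n → R) :
    (of v)ᵀ * of v = ∑ i, vecMulVec (v i) (v i) := by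
  ext a b
  simp [mul_apply, Matrix.sum_apply, vecMulVec_apply]

end RankOne

noncomputable def Bvec : Fin 3 → Fin 3 → ℝ :=
  ![![1 / Real.sqrt 2, -1 / Real.sqrt 6, -1 / Real.sqrt 3],
    ![1 / Real.sqrt 2, 1 / Real.sqrt 6, 1 / Real.sqrt 3],
    ![0, Real.sqrt 2 / Real.sqrt 3, -1 / Real.sqrt 3]]

theorem sqrt_six_eq : Real.sqrt 6 = Real.sqrt 2 * Real.sqrt 3 := by
  rw [← Real.sqrt_mul zero_le_two]; norm_num

theorem Bmat_eq_vecMulVec (i : Fin 3) : Bmat i = vecMulVec (Bvec i) (Bvec i) := by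
  have h2 : Real.sqrt 2 ^ 2 = 2 := Real.sq_sqrt zero_le_two
  have h3 : Real.sqrt 3 ^ 2 = 3 := Real.sq_sqrt zero_le_three
  ext a b
  fin_cases i <;> fin_cases a <;> fin_cases b <;>
    simp [Bmat, Bvec, vecMulVec_apply, sqrt_six_eq] <;> field_simp <;> simp [h2, h3] <;> ring_nf

theorem Bvec_dotProduct (i j : Fin 3) :
    Bvec i ⬝ᵥ Bvec j = (1 : Matrix (Fin 3) (Fin 3) ℝ) i j := by
  have h2 : Real.sqrt 2 ^ 2 = 2 := Real.sq_sqrt zero_le_two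
  have h3 : Real.sqrt 3 ^ 2 = 3 := Real.sq_sqrt zero_le_three
  fin_cases i <;> fin_cases j <;>
    simp [Bvec, dotProduct, Fin.sum_univ_three, sqrt_six_eq] <;> field_simp <;> simp [h2, h3] <;>
    ring_nf

theorem three_mul_Bvec_two_sq (i : Fin 3) : 3 * Bvec i 2 ^ 2 = 1 := by
  fin_cases i <;> simp [Bvec, div_pow]

theorem Bmat_sum_eq_one : Bmat 0 + Bmat 1 + Bmat 2 = (1 : Matrix (Fin 3) (Fin 3) ℝ) := by
  have rows_orthonormal : of Bvec * (of Bvec)ᵀ = 1 := ext Bvec_dotProduct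
  rw [← Fin.sum_univ_three, ← mul_eq_one_comm.mp rows_orthonormal,
    transpose_mul_self_eq_sum_vecMulVec]
  simp_rw [Bmat_eq_vecMulVec]

noncomputable def wvec (d : ℝ) (i : Fin 3) : Fin 3 → ℝ :=
  ![Real.sqrt (d + 1), Real.sqrt (d + 1), Real.sqrt (d - 2)] * Bvec i

theorem Fmat_eq_vecMulVec (d : ℝ) (i : Fin 3) : Fmat d i = vecMulVec (wvec d i) (wvec d i) := by
  rw [Fmat, Dmat, Bmat_eq_vecMulVec]
  exact diagonal_mul_vecMulVec_mul_diagonal _ _ _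

theorem wvec_dotProduct {d : ℝ} (hd : 2 ≤ d) (i j : Fin 3) :
    wvec d i ⬝ᵥ wvec d j = (d + 1) * (Bvec i ⬝ᵥ Bvec j) - 3 * (Bvec i 2 * Bvec j 2) := by
  have h1 : Real.sqrt (d + 1) ^ 2 = d + 1 := Real.sq_sqrt (by linarith)
  have h2 : Real.sqrt (d - 2) ^ 2 = d - 2 := Real.sq_sqrt (by linarith)
  simp only [wvec, dotProduct, Fin.sum_univ_three, Pi.mul_apply, cons_val_zero, cons_val_one,
    cons_val]
  linear_combination (Bvec i 0 * Bvec j 0 + Bvec i 1 * Bvec j 1) * h1 + Bvec i 2 * Bvec j 2 * h2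

theorem wvec_dotProduct_self {d : ℝ} (hd : 2 ≤ d) (i : Fin 3) : wvec d i ⬝ᵥ wvec d i = d := by
  rw [wvec_dotProduct hd, Bvec_dotProduct, one_apply_eq]
  linear_combination -three_mul_Bvec_two_sq i

theorem sq_wvec_dotProduct_of_ne {d : ℝ} (hd : 2 ≤ d) {i j : Fin 3} (hij : i ≠ j) :
    (wvec d i ⬝ᵥ wvec d j) ^ 2 = 1 := by
  rw [wvec_dotProduct hd, Bvec_dotProduct, one_apply_ne hij]
  linear_combination (3 * Bvec j 2 ^ 2) * three_mul_Bvec_two_sq i + three_mul_Bvec_two_sq j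

theorem stmt9 (d : ℝ) (hd : 2 ≤ d) :
    Bmat 0 + Bmat 1 + Bmat 2 = (1 : Matrix (Fin 3) (Fin 3) ℝ) ∧
      (∀ i : Fin 3, Fmat d i * Fmat d i = d • Fmat d i) ∧
        (∀ i j : Fin 3, i ≠ j → Fmat d i * Fmat d j * Fmat d i = Fmat d i) := by
  refine ⟨Bmat_sum_eq_one, fun i => ?_, fun i j hij => ?_⟩
  · rw [Fmat_eq_vecMulVec, vecMulVec_self_mul_self, wvec_dotProduct_self hd]
  · simp only [Fmat_eq_vecMulVec]
    exact vecMulVec_self_mul_mul_self_of_sq_dotProduct (sq_wvec_dotProduct_of_ne hd hij)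
end

section
/- Fix n ≥ 3. Let G be the symmetric group on {1, …, n−1} and let H ≤ G be the stabilizer of the point n−1 (a copy of the symmetric group on {1, …, n−2}). Let (ψ^ν)_{ν ∈ I} be a finite family of pairwise inequivalent irreducible unitary matrix representations of G, with ψ^ν : G → U(m_ν) (irreducible: every m_ν × m_ν complex matrix commuting with ψ^ν(σ) for all σ ∈ G is a scalar multiple of the identity; pairwise inequivalent: for μ ≠ ν, the only matrix T with T·ψ^μ(σ) = ψ^ν(σ)·T for all σ ∈ G is T = 0). Let φ : H → U(w) be a unitary matrix representation of H, extended to φ̂ : G → M_w(ℂ) by φ̂(σ) = φ(σ) if σ ∈ H and φ̂(σ) = 0 otherwise. Fix q ∈ {1, …, n−1} and r ∈ {1, …, w}. For ν ∈ I and j ∈ {1, …, m_ν}, set N^ν_j = (m_ν/(n−1)!)·Σ_{σ ∈ G} (ψ^ν(σ⁻¹))_{jj} · [σ(q) = q] · (φ̂((q, n−1)·σ·(q, n−1)))_{rr}, where (q, n−1) denotes the transposition of q and n−1 (the identity if q = n−1), and assume each N^ν_j is a strictly positive real number. Define, for a ∈ {1, …, n−1}, k ∈ {1, …, w}, z^{aν}_{kj}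 = (m_ν/(√(N^ν_j)·(n−1)!))·Σ_{σ ∈ G} (ψ^ν(σ⁻¹))_{jj} · [a = σ(q)] · (φ̂((a, n−1)·σ·(q, n−1)))_{kr}. Then the columns of z, indexed by pairs (ν, j), are orthonormal: for all μ, ν ∈ I, j' ∈ {1, …, m_μ}, j ∈ {1, …, m_ν}, Σ_{a=1}^{n−1} Σ_{k=1}^{w} conj(z^{aμ}_{kj'}) · z^{aν}_{kj} = 1 if (μ, j') = (ν, j) and 0 otherwise. In particular, if all the representations ψ^ν and φ are real orthogonal, then z is real and its columns are orthonormal with respect to the real inner product. -/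
/-!
Let `Φ = Ind_H^G φ` be the induced representation and `P^ν_j = (m_ν/|G|) Σ_σ ψ^ν(σ⁻¹)_{jj} Φ(σ)`
its isotypic projections. The column `(ν, j)` of `z` is the `(q, r)`-column of `P^ν_j` divided by
`√N^ν_j`, and `N^ν_j` is the `((q, r), (q, r))` entry of `P^ν_j`. Since `Φ(σ)ᴴ Φ(τ) = Φ(σ⁻¹τ)`,
Schur orthogonality of the matrix coefficients of the `ψ^ν` gives
`(P^μ_{j'})ᴴ P^ν_j = δ_{(μ,j'),(ν,j)} P^ν_j`, so the Gram entry of two columns is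
`δ_{(μ,j'),(ν,j)} N^ν_j / N^ν_j`.
-/

open Matrix
open scoped BigOperators

/-- The normalization constant
`N^ν_j = (m_ν/(n−1)!)·Σ_{σ ∈ S(n−1)} ψ^ν(σ⁻¹)_{jj}·[σ(q)=q]·φ̂((q,n−1)σ(q,n−1))_{rr}`. -/
noncomputable def Nval {n w : ℕ} {I : Type} {mdim : I → ℕ}
    (ψ : (ν : I) → Equiv.Perm (Fin (n - 1)) → Matrix (Fin (mdim ν)) (Fin (mdim ν)) ℂ)
    (φhat : Equiv.Perm (Fin (n - 1)) → Matrix (Fin w) (Fin w) ℂ)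
    (q pLast : Fin (n - 1)) (r : Fin w) (ν : I) (j : Fin (mdim ν)) : ℂ :=
  ((mdim ν : ℂ) / (Nat.factorial (n - 1) : ℂ)) *
    ∑ σ : Equiv.Perm (Fin (n - 1)),
      (ψ ν σ⁻¹) j j * (if σ q = q then 1 else 0) *
        (φhat (Equiv.swap q pLast * σ * Equiv.swap q pLast)) r r

/-- The matrix entries
`z^{aν}_{kj} = (m_ν/(√(N^ν_j)·(n−1)!))·Σ_{σ ∈ S(n−1)} ψ^ν(σ⁻¹)_{jj}·[a=σ(q)]·φ̂((a,n−1)σ(q,n−1))_{kr}`. -/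
noncomputable def zval {n w : ℕ} {I : Type} {mdim : I → ℕ}
    (ψ : (ν : I) → Equiv.Perm (Fin (n - 1)) → Matrix (Fin (mdim ν)) (Fin (mdim ν)) ℂ)
    (φhat : Equiv.Perm (Fin (n - 1)) → Matrix (Fin w) (Fin w) ℂ)
    (q pLast : Fin (n - 1)) (r : Fin w)
    (a : Fin (n - 1)) (ν : I) (k : Fin w) (j : Fin (mdim ν)) : ℂ :=
  ((mdim ν : ℂ) /
      ((Real.sqrt ((Nval ψ φhat q pLast r ν j).re) : ℂ) * (Nat.factorial (n - 1) : ℂ))) *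
    ∑ σ : Equiv.Perm (Fin (n - 1)),
      (ψ ν σ⁻¹) j j * (if a = σ q then 1 else 0) *
        (φhat (Equiv.swap a pLast * σ * Equiv.swap q pLast)) k r

section UnitaryMul

variable {G : Type*} [Group G] {κ : Type*} [Fintype κ] [DecidableEq κ]
  {ρ : G → Matrix κ κ ℂ}

theorem conjTranspose_mul_eq_map_inv_mul (hmul : ∀ g h, ρ (g * h) = ρ g * ρ h)
    (hunit : ∀ g, ρ g * (ρ g)ᴴ = 1) (g h : G) : (ρ g)ᴴ * ρ h = ρ (g⁻¹ * h) := by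
  calc (ρ g)ᴴ * ρ h = (ρ g)ᴴ * ρ g * ρ (g⁻¹ * h) := by
        rw [Matrix.mul_assoc, ← hmul, mul_inv_cancel_left]
    _ = ρ (g⁻¹ * h) := by rw [mul_eq_one_comm.mp (hunit g), Matrix.one_mul]

theorem conjTranspose_map_inv (hone : ρ 1 = 1) (hmul : ∀ g h, ρ (g * h) = ρ g * ρ h)
    (hunit : ∀ g, ρ g * (ρ g)ᴴ = 1) (g : G) : (ρ g⁻¹)ᴴ = ρ g := by
  simpa [hone] using conjTranspose_mul_eq_map_inv_mul hmul hunit g⁻¹ 1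

end UnitaryMul

section Induced

open Equiv

variable {α κ : Type*} [Fintype α] [DecidableEq α] [Fintype κ] [DecidableEq κ]

/-- `Ind_H^G φ` for `H` the stabilizer of `p`, with the transpositions `swap a p` as coset
representatives. -/
noncomputable def inducedMatrix (φ : Perm α → Matrix κ κ ℂ) (p : α) (σ : Perm α) :
    Matrix (α × κ) (α × κ) ℂ :=
  of fun x y => (if x.1 = σ y.1 then 1 else 0) * φ (swap x.1 p * σ * swap y.1 p) x.2 y.2

variable {φ : Perm α → Matrix κ κ ℂ} {p : α}

theorem conjTranspose_inducedMatrix_mul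
    (hmul : ∀ σ τ, σ p = p → τ p = p → φ (σ * τ) = φ σ * φ τ)
    (hunit : ∀ σ, σ p = p → φ σ * (φ σ)ᴴ = 1) (σ τ : Perm α) :
    (inducedMatrix φ p σ)ᴴ * inducedMatrix φ p τ = inducedMatrix φ p (σ⁻¹ * τ) := by
  have hstab (g h : Perm α) (hg : g p = p) (hh : h p = p) : (φ g)ᴴ * φ h = φ (g⁻¹ * h) :=
    conjTranspose_mul_eq_map_inv_mul (ρ := fun g : MulAction.stabilizer (Perm α) p => φ g)
      (fun g h => hmul g h g.2 h.2) (fun g => hunit g g.2) ⟨g, hg⟩ ⟨h, hh⟩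
  have hfix (σ : Perm α) (b : α) : (swap (σ b) p * σ * swap b p) p = p := by
    simp [Perm.mul_apply]
  ext ⟨b, l⟩ ⟨b', l'⟩
  -- only `a = σ b` contributes, and if `σ b = τ b'` both arguments of `φ` fix `p`
  rw [mul_apply, Fintype.sum_prod_type, Finset.sum_eq_single (σ b)
    (fun a _ ha => by simp [inducedMatrix, ha]) (by simp)]
  simp only [inducedMatrix, conjTranspose_apply, of_apply, if_true, one_mul, Perm.mul_apply,
    Perm.eq_inv_iff_eq]
  by_cases hb : σ b = τ b'
  · have hτ : (swap (σ b) p * τ * swap b' p) p = p := by rw [hb]; exact hfix τ b'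
    have hinv : (swap (σ b) p * σ * swap b p)⁻¹ * (swap (σ b) p * τ * swap b' p) =
        swap b p * (σ⁻¹ * τ) * swap b' p := by
      simp [_root_.mul_inv_rev, swap_inv, mul_assoc]
    simp only [if_pos hb, one_mul]
    rw [← hinv, ← hstab _ _ (hfix σ b) hτ, mul_apply]
    rfl
  · simp [hb]

end Induced

theorem mul_single_one_mul_apply {R l m n o : Type*} [NonAssocSemiring R] [Fintype m]
    [Fintype n] [DecidableEq m] [DecidableEq n] (A : Matrix l m R) (B : Matrix n o R) (a : l)
    (b : m) (c : n) (d : o) :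
    (A * single b c (1 : R) * B) a d = A a b * B c d := by
  simp [Matrix.mul_apply, Matrix.single_apply, ite_and]

section Schur

variable {G : Type*} [Group G] [Fintype G] {d e : Type*} [Fintype d] [Fintype e]
  {ρ : G → Matrix d d ℂ} {π : G → Matrix e e ℂ}

theorem sum_mul_mul_inv_intertwines (hρ : ∀ g h, ρ (g * h) = ρ g * ρ h)
    (hπ : ∀ g h, π (g * h) = π g * π h) (E : Matrix e d ℂ) (τ : G) :
    (∑ g, π g * E * ρ g⁻¹) * ρ τ = π τ * ∑ g, π g * E * ρ g⁻¹ := by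
  rw [Matrix.sum_mul, Matrix.mul_sum]
  refine Fintype.sum_equiv (Equiv.mulLeft τ⁻¹) _ _ fun g => ?_
  rw [Equiv.coe_mulLeft, Matrix.mul_assoc, ← hρ, ← Matrix.mul_assoc, ← Matrix.mul_assoc, ← hπ,
    mul_inv_cancel_left, _root_.mul_inv_rev, inv_inv]

theorem sum_coeff_mul_coeff_inv_eq_zero [DecidableEq d] [DecidableEq e]
    (hρ : ∀ g h, ρ (g * h) = ρ g * ρ h) (hπ : ∀ g h, π (g * h) = π g * π h)
    (hineq : ∀ T : Matrix e d ℂ, (∀ g, T * ρ g = π g * T) → T = 0) (a b : e) (c f : d) :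
    ∑ g, π g a b * ρ g⁻¹ c f = 0 := by
  have hT := congrFun₂ (hineq _ (sum_mul_mul_inv_intertwines hρ hπ (single b c 1))) a f
  simpa only [Matrix.sum_apply, mul_single_one_mul_apply, Matrix.zero_apply] using hT

theorem sum_coeff_mul_coeff_inv_of_irreducible [DecidableEq d] (hone : ρ 1 = 1)
    (hρ : ∀ g h, ρ (g * h) = ρ g * ρ h)
    (hirr : ∀ T : Matrix d d ℂ, (∀ g, T * ρ g = ρ g * T) → ∃ c : ℂ, T = c • 1) (a b c f : d) :
    ∑ g, ρ g a b * ρ g⁻¹ c f =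
      if b = c ∧ a = f then (Fintype.card G : ℂ) / Fintype.card d else 0 := by
  obtain ⟨s, hs⟩ := hirr _ (sum_mul_mul_inv_intertwines hρ hρ (single b c 1))
  have htrace_conj (g : G) : trace (ρ g * single b c 1 * ρ g⁻¹) = if b = c then 1 else 0 := by
    rw [trace_mul_cycle, ← hρ, inv_mul_cancel, hone, Matrix.one_mul]
    split_ifs with hbc
    · rw [hbc, trace_single_eq_same]
    · exact trace_single_eq_of_ne b c 1 hbc
  have htrace : s * Fintype.card d = Fintype.card G * (if b = c then 1 else 0) := by
    simpa [trace_sum, htrace_conj, mul_comm] using (congrArg trace hs).symm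
  have : Nonempty d := ⟨a⟩
  have hcard : (Fintype.card d : ℂ) ≠ 0 := Nat.cast_ne_zero.mpr Fintype.card_ne_zero
  calc ∑ g, ρ g a b * ρ g⁻¹ c f = (s • (1 : Matrix d d ℂ)) a f := by
        rw [← hs]; simp only [Matrix.sum_apply, mul_single_one_mul_apply]
    _ = _ := by
        rw [Matrix.smul_apply, one_apply, smul_eq_mul]
        split_ifs at htrace ⊢ <;> simp_all [eq_div_iff hcard]

end Schur

section Projection

variable {G : Type*} [Group G] [Fintype G] {d e κ : Type*} [Fintype d] [Fintype e]

noncomputable def isotypicProjection (ρ : G → Matrix d d ℂ) (j : d) (Φ : G → Matrix κ κ ℂ) :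
    Matrix κ κ ℂ :=
  ((Fintype.card d : ℂ) / Fintype.card G) • ∑ g, ρ g⁻¹ j j • Φ g

theorem isotypicProjection_apply (ρ : G → Matrix d d ℂ) (j : d) (Φ : G → Matrix κ κ ℂ)
    (x y : κ) :
    isotypicProjection ρ j Φ x y =
      (Fintype.card d : ℂ) / Fintype.card G * ∑ g, ρ g⁻¹ j j * Φ g x y := by
  simp [isotypicProjection, Matrix.sum_apply]

variable [Fintype κ] {ρ : G → Matrix d d ℂ} {π : G → Matrix e e ℂ} {Φ : G → Matrix κ κ ℂ}

theorem conjTranspose_isotypicProjection_mul (hπ : ∀ g, (π g⁻¹)ᴴ = π g)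
    (hρ : ∀ g h, ρ (g * h) = ρ g * ρ h) (hΦ : ∀ g h, (Φ g)ᴴ * Φ h = Φ (g⁻¹ * h))
    (i : e) (j : d) :
    (isotypicProjection π i Φ)ᴴ * isotypicProjection ρ j Φ =
      ((Fintype.card e : ℂ) / Fintype.card G * (Fintype.card d / Fintype.card G)) •
        ∑ h, (∑ l, ρ h⁻¹ j l * ∑ g, π g i i * ρ g⁻¹ l j) • Φ h := by
  calc (isotypicProjection π i Φ)ᴴ * isotypicProjection ρ j Φ
      = ((Fintype.card e : ℂ) / Fintype.card G * (Fintype.card d / Fintype.card G)) •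
          ∑ g, ∑ h, (π g i i * ρ h⁻¹ j j) • Φ (g⁻¹ * h) := by
        simp only [isotypicProjection, conjTranspose_smul, conjTranspose_sum, Matrix.smul_mul,
          Matrix.mul_smul, Matrix.sum_mul, Matrix.mul_sum, hΦ, smul_smul, Finset.smul_sum,
          star_mul']
        rw [Finset.sum_comm]
        refine Finset.sum_congr rfl fun g _ => Finset.sum_congr rfl fun h _ => ?_
        rw [← conjTranspose_apply, hπ]
        congr 1
        simp only [star_div₀, star_natCast]
        ring
    _ = ((Fintype.card e : ℂ) / Fintype.card G * (Fintype.card d / Fintype.card G)) •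
          ∑ g, ∑ h, (π g i i * ρ (h⁻¹ * g⁻¹) j j) • Φ h := by
        congr 1
        refine Finset.sum_congr rfl fun g _ => ?_
        exact (Fintype.sum_equiv (Equiv.mulLeft g) _ _ fun h => by simp).symm
    _ = _ := by
        congr 1
        rw [Finset.sum_comm]
        refine Finset.sum_congr rfl fun h _ => ?_
        simp only [hρ, mul_apply, Finset.mul_sum, Finset.sum_smul]
        rw [Finset.sum_comm]
        refine Finset.sum_congr rfl fun l _ => Finset.sum_congr rfl fun g _ => ?_
        rw [mul_left_comm]

theorem conjTranspose_isotypicProjection_mul_eq_zero [DecidableEq d] [DecidableEq e]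
    (hπinv : ∀ g, (π g⁻¹)ᴴ = π g) (hπ : ∀ g h, π (g * h) = π g * π h)
    (hρ : ∀ g h, ρ (g * h) = ρ g * ρ h) (hΦ : ∀ g h, (Φ g)ᴴ * Φ h = Φ (g⁻¹ * h))
    (hineq : ∀ T : Matrix e d ℂ, (∀ g, T * ρ g = π g * T) → T = 0) (i : e) (j : d) :
    (isotypicProjection π i Φ)ᴴ * isotypicProjection ρ j Φ = 0 := by
  simp [conjTranspose_isotypicProjection_mul hπinv hρ hΦ,
    sum_coeff_mul_coeff_inv_eq_zero hρ hπ hineq]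

theorem conjTranspose_isotypicProjection_mul_self [DecidableEq d]
    (hone : ρ 1 = 1) (hρinv : ∀ g, (ρ g⁻¹)ᴴ = ρ g) (hρ : ∀ g h, ρ (g * h) = ρ g * ρ h)
    (hΦ : ∀ g h, (Φ g)ᴴ * Φ h = Φ (g⁻¹ * h))
    (hirr : ∀ T : Matrix d d ℂ, (∀ g, T * ρ g = ρ g * T) → ∃ c : ℂ, T = c • 1) (i j : d) :
    (isotypicProjection ρ i Φ)ᴴ * isotypicProjection ρ j Φ =
      if i = j then isotypicProjection ρ j Φ else 0 := by
  rw [conjTranspose_isotypicProjection_mul hρinv hρ hΦ]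
  simp_rw [sum_coeff_mul_coeff_inv_of_irreducible hone hρ hirr]
  split_ifs with hij
  · subst hij
    have : Nonempty d := ⟨i⟩
    have hd : (Fintype.card d : ℂ) ≠ 0 := Nat.cast_ne_zero.mpr Fintype.card_ne_zero
    have hG : (Fintype.card G : ℂ) ≠ 0 := Nat.cast_ne_zero.mpr Fintype.card_ne_zero
    simp only [isotypicProjection, ite_and, if_true, mul_ite, mul_zero, Finset.sum_ite_eq,
      Finset.mem_univ, Finset.smul_sum, smul_smul]
    refine Finset.sum_congr rfl fun g _ => ?_
    congr 1
    field_simp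
  · simp [hij]

end Projection

section Family

variable {G : Type*} [Group G] [Fintype G] {κ : Type*} [Fintype κ] {I : Type*} [DecidableEq I]
  {d : I → Type*} [∀ ν, Fintype (d ν)] [∀ ν, DecidableEq (d ν)]
  {ψ : (ν : I) → G → Matrix (d ν) (d ν) ℂ} {Φ : G → Matrix κ κ ℂ}

theorem conjTranspose_isotypicProjection_mul_isotypicProjection (hone : ∀ ν, ψ ν 1 = 1)
    (hmul : ∀ ν g h, ψ ν (g * h) = ψ ν g * ψ ν h) (hunit : ∀ ν g, ψ ν g * (ψ ν g)ᴴ = 1)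
    (hirr : ∀ ν (T : Matrix (d ν) (d ν) ℂ), (∀ g, T * ψ ν g = ψ ν g * T) → ∃ c : ℂ, T = c • 1)
    (hineq : ∀ μ ν, μ ≠ ν → ∀ T : Matrix (d ν) (d μ) ℂ, (∀ g, T * ψ μ g = ψ ν g * T) → T = 0)
    (hΦ : ∀ g h, (Φ g)ᴴ * Φ h = Φ (g⁻¹ * h)) (μ ν : I) (i : d μ) (j : d ν) :
    (isotypicProjection (ψ μ) i Φ)ᴴ * isotypicProjection (ψ ν) j Φ =
      if (⟨μ, i⟩ : Σ ν, d ν) = ⟨ν, j⟩ then isotypicProjection (ψ ν) j Φ else 0 := by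
  have hinv ν := conjTranspose_map_inv (hone ν) (hmul ν) (hunit ν)
  by_cases hμν : μ = ν
  · subst hμν
    rw [conjTranspose_isotypicProjection_mul_self (hone μ) (hinv μ) (hmul μ) hΦ (hirr μ)]
    simp
  · rw [conjTranspose_isotypicProjection_mul_eq_zero (hinv μ) (hmul μ) (hmul ν) hΦ
      (hineq ν μ (Ne.symm hμν)), if_neg (by simp [hμν])]

end Family

theorem div_ofReal_sqrt_re_mul_self {z : ℂ} (hpos : 0 < z.re) (him : z.im = 0) :
    z / ((√z.re : ℂ) * (√z.re : ℂ)) = 1 := by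
  have hsq : ((√z.re : ℂ) * (√z.re : ℂ)) = z := by
    rw [← Complex.ofReal_mul, Real.mul_self_sqrt hpos.le]
    exact Complex.ext rfl (by simp [him])
  rw [hsq, div_self]
  exact fun hz => hpos.ne' (by rw [hz, Complex.zero_re])

/-- `G` is `Equiv.Perm (Fin (n - 1))`, `pLast` is the point `n − 1`, whose stabilizer is `H`,
and `φhat` is `φ̂`. -/
theorem stmt14_general (n w : ℕ)
    {I : Type} [DecidableEq I] (mdim : I → ℕ)
    (ψ : (ν : I) → Equiv.Perm (Fin (n - 1)) → Matrix (Fin (mdim ν)) (Fin (mdim ν)) ℂ)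
    (hψone : ∀ ν, ψ ν 1 = 1)
    (hψmul : ∀ ν σ τ, ψ ν (σ * τ) = ψ ν σ * ψ ν τ)
    (hψunit : ∀ ν σ, ψ ν σ * (ψ ν σ)ᴴ = 1)
    (hψirr : ∀ ν (T : Matrix (Fin (mdim ν)) (Fin (mdim ν)) ℂ),
      (∀ σ, T * ψ ν σ = ψ ν σ * T) →
        ∃ c : ℂ, T = c • (1 : Matrix (Fin (mdim ν)) (Fin (mdim ν)) ℂ))
    (hψineq : ∀ μ ν, μ ≠ ν → ∀ T : Matrix (Fin (mdim ν)) (Fin (mdim μ)) ℂ,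
      (∀ σ, T * ψ μ σ = ψ ν σ * T) → T = 0)
    (pLast : Fin (n - 1))
    (φhat : Equiv.Perm (Fin (n - 1)) → Matrix (Fin w) (Fin w) ℂ)
    (hφmul : ∀ σ τ, σ pLast = pLast → τ pLast = pLast →
      φhat (σ * τ) = φhat σ * φhat τ)
    (hφunit : ∀ σ, σ pLast = pLast → φhat σ * (φhat σ)ᴴ = 1)
    (q : Fin (n - 1)) (r : Fin w)
    (hN : ∀ ν j, 0 < (Nval ψ φhat q pLast r ν j).re ∧
      (Nval ψ φhat q pLast r ν j).im = 0)
    (μ ν : I) (j' : Fin (mdim μ)) (j : Fin (mdim ν)) :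
    (∑ a : Fin (n - 1), ∑ k : Fin w,
        (starRingEnd ℂ) (zval ψ φhat q pLast r a μ k j') *
          zval ψ φhat q pLast r a ν k j) =
      if (⟨μ, j'⟩ : Σ i : I, Fin (mdim i)) = ⟨ν, j⟩ then 1 else 0 := by
  let P ν (j : Fin (mdim ν)) := isotypicProjection (ψ ν) j (inducedMatrix φhat pLast)
  let s ν (j : Fin (mdim ν)) : ℂ := √(Nval ψ φhat q pLast r ν j).re
  have hNval ν j : Nval ψ φhat q pLast r ν j = P ν j (q, r) (q, r) := by
    simp only [P, Nval, isotypicProjection_apply, inducedMatrix, of_apply, Fintype.card_fin,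
      Fintype.card_perm, mul_assoc, eq_comm (a := q)]
  have hzval a ν k j : zval ψ φhat q pLast r a ν k j = P ν j (a, k) (q, r) / s ν j := by
    simp only [P, s, zval, isotypicProjection_apply, inducedMatrix, of_apply, Fintype.card_fin,
      Fintype.card_perm, mul_assoc]
    ring
  calc _ = ((P μ j')ᴴ * P ν j) (q, r) (q, r) / (s μ j' * s ν j) := by
        simp only [hzval, map_div₀, s, Complex.conj_ofReal, div_mul_div_comm]
        simp only [mul_apply, Fintype.sum_prod_type, conjTranspose_apply, Finset.sum_div,
          starRingEnd_apply]
    _ = _ := by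
        simp only [P, conjTranspose_isotypicProjection_mul_isotypicProjection hψone hψmul hψunit
          hψirr hψineq (conjTranspose_inducedMatrix_mul hφmul hφunit)]
        split_ifs with h
        · cases h
          change P μ j' (q, r) (q, r) / (s μ j' * s μ j') = 1
          rw [← hNval]
          exact div_ofReal_sqrt_re_mul_self (hN μ j').1 (hN μ j').2
        · simp

/-- The columns of the matrix `z`, indexed by pairs `(ν, j)`, are orthonormal. Here `G` is the
symmetric group on `{1,…,n−1}` (modelled as `Equiv.Perm (Fin (n−1))`), `H` is the stabilizer of
the last point `n−1` (modelled by the element `pLast` of index `n−2`), `(ψ^ν)` is a finite family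
of pairwise inequivalent irreducible unitary matrix representations of `G`, and `φ̂` extends a
unitary matrix representation `φ` of `H` by zero outside `H`. -/
theorem stmt14 (n w : ℕ) (hn : 3 ≤ n)
    {I : Type} [Fintype I] [DecidableEq I] (mdim : I → ℕ)
    (ψ : (ν : I) → Equiv.Perm (Fin (n - 1)) → Matrix (Fin (mdim ν)) (Fin (mdim ν)) ℂ)
    (hψone : ∀ ν, ψ ν 1 = 1)
    (hψmul : ∀ ν σ τ, ψ ν (σ * τ) = ψ ν σ * ψ ν τ)
    (hψunit : ∀ ν σ, ψ ν σ * (ψ ν σ)ᴴ = 1)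
    (hψirr : ∀ ν (T : Matrix (Fin (mdim ν)) (Fin (mdim ν)) ℂ),
      (∀ σ, T * ψ ν σ = ψ ν σ * T) →
        ∃ c : ℂ, T = c • (1 : Matrix (Fin (mdim ν)) (Fin (mdim ν)) ℂ))
    (hψineq : ∀ μ ν, μ ≠ ν → ∀ T : Matrix (Fin (mdim ν)) (Fin (mdim μ)) ℂ,
      (∀ σ, T * ψ μ σ = ψ ν σ * T) → T = 0)
    (pLast : Fin (n - 1)) (hpLast : (pLast : ℕ) = n - 2)
    (φhat : Equiv.Perm (Fin (n - 1)) → Matrix (Fin w) (Fin w) ℂ)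
    (hφone : φhat 1 = 1)
    (hφmul : ∀ σ τ, σ pLast = pLast → τ pLast = pLast →
      φhat (σ * τ) = φhat σ * φhat τ)
    (hφunit : ∀ σ, σ pLast = pLast → φhat σ * (φhat σ)ᴴ = 1)
    (hφzero : ∀ σ, σ pLast ≠ pLast → φhat σ = 0)
    (q : Fin (n - 1)) (r : Fin w)
    (hN : ∀ ν j, 0 < (Nval ψ φhat q pLast r ν j).re ∧
      (Nval ψ φhat q pLast r ν j).im = 0)
    (μ ν : I) (j' : Fin (mdim μ)) (j : Fin (mdim ν)) :
    (∑ a : Fin (n - 1), ∑ k : Fin w,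
        (starRingEnd ℂ) (zval ψ φhat q pLast r a μ k j') *
          zval ψ φhat q pLast r a ν k j) =
      if (⟨μ, j'⟩ : Σ i : I, Fin (mdim i)) = ⟨ν, j⟩ then 1 else 0 :=
  stmt14_general n w mdim ψ hψone hψmul hψunit hψirr hψineq pLast φhat hφmul hφunit q r hN μ ν j' j
end
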